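/- A finite graph G on n vertices has competition number at most 2 if and only if there exists a sequence of n cliques that incrementally covers V(G). -/

import Mathlib

namespace CompKim

open SimpleGraph

variable {V : Type*}

/-- The competition graph of a digraph given as a relation: distinct vertices are
adjacent iff they have a common out-neighbor. -/
def competitionGraph {W : Type*} (D : W → W → Prop) : SimpleGraph W where
  Adj a b := a ≠ b ∧ ∃ w, D a w ∧ D b w
  symm := ⟨by rintro a b ⟨hab, w, h1, h2⟩; exact ⟨hab.symm, w, h2, h1⟩⟩
  loopless := ⟨by rintro a ⟨h, -⟩; exact h rfl⟩

/-- A relation is a DAG relation if it admits no directed cycle. -/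
def IsDagRel {W : Type*} (D : W → W → Prop) : Prop := ∀ w, ¬ Relation.TransGen D w w

/-- `G` together with `k` added isolated vertices. -/
def addIsolated {V : Type*} (G : SimpleGraph V) (k : ℕ) : SimpleGraph (V ⊕ Fin k) where
  Adj a b := ∃ u v, a = Sum.inl u ∧ b = Sum.inl v ∧ G.Adj u v
  symm := ⟨by rintro a b ⟨u, v, rfl, rfl, h⟩; exact ⟨v, u, rfl, rfl, h.symm⟩⟩
  loopless := ⟨by
    rintro a ⟨u, v, rfl, heq, hadj⟩
    cases Sum.inl.inj heq
    exact G.irrefl hadj⟩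

/-- The competition number: the least `k` such that `G` plus `k` isolated vertices is
the competition graph of a directed acyclic graph. -/
noncomputable def competitionNumber {V : Type*} (G : SimpleGraph V) : ℕ :=
  sInf {k | ∃ D : (V ⊕ Fin k) → (V ⊕ Fin k) → Prop,
    IsDagRel D ∧ competitionGraph D = addIsolated G k}

/-- A sequence of `t` cliques `C` incrementally covers `V'`: `|V'| ≥ t`, the cliques
cover all edges incident with `V'`, and for every `i ∈ {1, …, t-1}` the first `i + 1`
cliques cover the vertex stars of at least `i` distinct vertices of `V'`. -/
def IncrementallyCovers (G : SimpleGraph V) {t : ℕ} (C : Fin t → Finset V)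
    (V' : Finset V) : Prop :=
  t ≤ V'.card ∧
  (∀ e ∈ G.edgeSet, (∃ x ∈ e, x ∈ V') → ∃ i, ∀ x ∈ e, x ∈ C i) ∧
  (∀ i : ℕ, 1 ≤ i → i ≤ t - 1 →
    ∃ W : Finset V, W ⊆ V' ∧ i ≤ W.card ∧
      ∀ w ∈ W, ∀ e ∈ G.edgeSet, w ∈ e → ∃ j : Fin t, (j : ℕ) < i + 1 ∧ ∀ x ∈ e, x ∈ C j)

lemma isDagRel_of_rank {W : Type*} {D : W → W → Prop} (r : W → ℕ)
    (h : ∀ a b, D a b → r b < r a) : IsDagRel D := by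
  intro w hw
  have key : ∀ a b, Relation.TransGen D a b → r b < r a := by
    intro a b hab
    induction hab with
    | single h1 => exact h _ _ h1
    | tail _ h2 ih => exact (h _ _ h2).trans ih
  exact lt_irrefl _ (key w w hw)

/-- Every finite graph, with enough isolated vertices added, is the competition graph
of a DAG (one prey vertex per edge). -/
lemma exists_dag [Fintype V] (G : SimpleGraph V) :
    ∃ k : ℕ, ∃ D : (V ⊕ Fin k) → (V ⊕ Fin k) → Prop,
      IsDagRel D ∧ competitionGraph D = addIsolated G k := by
  classical
  refine ⟨G.edgeFinset.card, fun a b => ∃ u i, a = Sum.inl u ∧ b = Sum.inr i ∧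
      u ∈ ((G.edgeFinset.equivFin.symm i : G.edgeFinset) : Sym2 V), ?_, ?_⟩
  · refine isDagRel_of_rank (Sum.elim (fun _ => 1) (fun _ => 0)) ?_
    rintro a b ⟨u, i, rfl, rfl, -⟩
    simp
  · ext a b
    constructor
    · rintro ⟨hne, w, ⟨u, i, rfl, rfl, hu⟩, ⟨v, i', hb, hw', hv⟩⟩
      cases Sum.inr.inj hw'
      obtain ⟨v, rfl⟩ : ∃ v', Sum.inl v' = b := ⟨v, hb.symm⟩
      cases Sum.inl.inj hb
      have hne' : u ≠ v := fun h => hne (by rw [h])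
      set e := (G.edgeFinset.equivFin.symm i : G.edgeFinset)
      have he : (e : Sym2 V) ∈ G.edgeSet := (SimpleGraph.mem_edgeFinset).mp e.2
      have : (e : Sym2 V) = s(u, v) := ((Sym2.mem_and_mem_iff hne').mp ⟨hu, hv⟩)
      rw [this] at he
      exact ⟨u, v, rfl, rfl, he⟩
    · rintro ⟨u, v, rfl, rfl, hadj⟩
      have he : s(u,v) ∈ G.edgeFinset := (SimpleGraph.mem_edgeFinset).mpr hadj
      refine ⟨by simp [hadj.ne], Sum.inr (G.edgeFinset.equivFin ⟨_, he⟩),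
        ⟨u, _, rfl, rfl, ?_⟩, ⟨v, _, rfl, rfl, ?_⟩⟩ <;> simp

lemma part_forward [Fintype V] (G : SimpleGraph V)
    (C : Fin (Fintype.card V) → Finset V)
    (hclique : ∀ i, G.IsClique (C i : Set V))
    (hinc : IncrementallyCovers G C Finset.univ) :
    competitionNumber G ≤ 2 := by
  classical
  obtain ⟨-, hcover, hstar⟩ := hinc
  set T : ℕ → Finset V := fun i => Finset.univ.filter
    (fun v => ∀ e ∈ G.edgeSet, v ∈ e → ∃ j : Fin (Fintype.card V), (j : ℕ) ≤ i ∧ ∀ x ∈ e, x ∈ C j) with hT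
  have hTcard : ∀ i : ℕ, 1 ≤ i → i ≤ Fintype.card V → i ≤ (T i).card := by
    intro i h1 h2
    rcases eq_or_lt_of_le h2 with heq | hlt
    · have : T i = Finset.univ := by
        apply Finset.eq_univ_of_forall
        intro v
        simp only [hT, Finset.mem_filter, Finset.mem_univ, true_and]
        intro e he hve
        obtain ⟨j, hj⟩ := hcover e he ⟨v, hve, Finset.mem_univ v⟩
        exact ⟨j, by rw [heq]; exact le_of_lt j.2, hj⟩
      rw [this, Finset.card_univ]; omega
    · obtain ⟨W, hWsub, hWcard, hWprop⟩ := hstar i h1 (by omega)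
      refine hWcard.trans (Finset.card_le_card ?_)
      intro v hv
      simp only [hT, Finset.mem_filter, Finset.mem_univ, true_and]
      intro e he hve
      obtain ⟨j, hj1, hj2⟩ := hWprop v hv e he hve
      exact ⟨j, by omega, hj2⟩
  have hall : ∀ s : Finset (Fin (Fintype.card V)), s.card ≤ (s.biUnion (fun j => T ((j:ℕ)+1))).card := by
    intro s
    rcases s.eq_empty_or_nonempty with rfl | hs
    · simp
    · set m := s.max' hs with hm
      have hsub : T ((m:ℕ)+1) ⊆ s.biUnion (fun j => T ((j:ℕ)+1)) :=
        Finset.subset_biUnion_of_mem (s := s) (fun j => T ((j:ℕ)+1)) (s.max'_mem hs)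
      have h1 : s.card ≤ (m:ℕ)+1 := by
        have hsubr : s.image (Fin.val) ⊆ Finset.range ((m:ℕ)+1) := by
          intro x hx
          simp only [Finset.mem_image] at hx
          obtain ⟨y, hy, rfl⟩ := hx
          simp only [Finset.mem_range, Nat.lt_succ_iff]
          exact s.le_max' y hy
        calc s.card = (s.image Fin.val).card :=
              (Finset.card_image_of_injective s Fin.val_injective).symm
          _ ≤ (Finset.range ((m:ℕ)+1)).card := Finset.card_le_card hsubr
          _ = (m:ℕ)+1 := by simp
      have h2 : (m:ℕ)+1 ≤ (T ((m:ℕ)+1)).card := hTcard _ (by omega) m.2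
      exact h1.trans (h2.trans (Finset.card_le_card hsub))
  obtain ⟨f, hfinj, hfT⟩ :=
    (Finset.all_card_le_biUnion_card_iff_exists_injective (fun j : Fin (Fintype.card V) => T ((j:ℕ)+1))).mp hall
  have hfbij : Function.Bijective f :=
    (Fintype.bijective_iff_injective_and_card f).mpr ⟨hfinj, by simp⟩
  set φ := Equiv.ofBijective f hfbij with hφ
  set σ := φ.symm with hσ
  have hσf : ∀ x, σ (f x) = x := fun x => φ.symm_apply_apply x
  have hfσ : ∀ v, f (σ v) = v := fun v => φ.apply_symm_apply v
  set C' : Fin (Fintype.card V) → Finset V := fun j => (C j).filter (fun v => (j:ℕ) ≤ (σ v : ℕ) + 1) with hC'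
  have hf_cov : ∀ (u : V), ∀ e ∈ G.edgeSet, u ∈ e →
      ∃ j : Fin (Fintype.card V), (j:ℕ) ≤ (σ u : ℕ) + 1 ∧ ∀ x ∈ e, x ∈ C j := by
    intro u e he hue
    have hu : f (σ u) ∈ T ((σ u : ℕ)+1) := hfT (σ u)
    rw [hfσ] at hu
    simp only [hT, Finset.mem_filter] at hu
    exact hu.2 e he hue
  have key : ∀ a b : V, G.Adj a b → (σ a : ℕ) ≤ (σ b : ℕ) →
      ∃ j : Fin (Fintype.card V), a ∈ C' j ∧ b ∈ C' j := by
    intro a b hab hle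
    obtain ⟨j, hj1, hj2⟩ := hf_cov a s(a,b) (G.mem_edgeSet.mpr hab) (by simp)
    refine ⟨j, ?_, ?_⟩ <;> simp only [hC', Finset.mem_filter]
    · exact ⟨hj2 a (by simp), hj1⟩
    · exact ⟨hj2 b (by simp), by omega⟩
  have hcov' : ∀ e ∈ G.edgeSet, ∃ j : Fin (Fintype.card V), ∀ x ∈ e, x ∈ C' j := by
    intro e he
    induction e using Sym2.ind with
    | _ u v =>
      have hadj : G.Adj u v := G.mem_edgeSet.mp he
      have main : ∃ j : Fin (Fintype.card V), u ∈ C' j ∧ v ∈ C' j := by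
        rcases le_total ((σ u : ℕ)) ((σ v : ℕ)) with hle | hle
        · exact key u v hadj hle
        · obtain ⟨j, h1, h2⟩ := key v u hadj.symm hle
          exact ⟨j, h2, h1⟩
      obtain ⟨j, h1, h2⟩ := main
      refine ⟨j, fun x hx => ?_⟩
      rcases Sym2.mem_iff.mp hx with rfl | rfl <;> assumption
  set prey : Fin (Fintype.card V) → (V ⊕ Fin 2) := fun j =>
    if h : (j:ℕ) < 2 then Sum.inr ⟨(j:ℕ), h⟩
    else Sum.inl (f ⟨(j:ℕ) - 2, by have := j.2; omega⟩) with hprey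
  have hprey_inj : Function.Injective prey := by
    intro j j' h
    simp only [hprey] at h
    by_cases h1 : (j:ℕ) < 2 <;> by_cases h2 : (j':ℕ) < 2 <;>
      simp only [h1, h2, dite_true, dite_false, dif_pos, dif_neg, not_false_iff] at h
    · rw [Sum.inr.injEq, Fin.mk.injEq] at h
      exact Fin.ext h
    · exact absurd h (by simp)
    · exact absurd h (by simp)
    · rw [Sum.inl.injEq] at h
      have := hfinj h
      rw [Fin.mk.injEq] at this
      exact Fin.ext (by omega)
  apply Nat.sInf_le
  refine ⟨fun a b => ∃ u j, a = Sum.inl u ∧ u ∈ C' j ∧ b = prey j, ?_, ?_⟩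
  · refine isDagRel_of_rank (Sum.elim (fun v => (σ v : ℕ) + 1) (fun _ => 0)) ?_
    rintro a b ⟨u, j, rfl, hu, rfl⟩
    simp only [hC', Finset.mem_filter] at hu
    have hj : (j:ℕ) ≤ (σ u : ℕ) + 1 := hu.2
    simp only [hprey]
    split
    · simp
    · rename_i h2
      simp only [Sum.elim_inl, Sum.elim_inr]
      rw [hσf]
      show ((j:ℕ) - 2) + 1 < (σ u : ℕ) + 1
      omega
  · ext a b
    constructor
    · rintro ⟨hne, w, ⟨u, j, rfl, hu, rfl⟩, ⟨v, j', hb, hv, hw'⟩⟩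
      cases hprey_inj hw'
      subst hb
      simp only [hC', Finset.mem_filter] at hu hv
      have hne' : u ≠ v := fun h => hne (by rw [h])
      exact ⟨u, v, rfl, rfl, hclique j (Finset.mem_coe.mpr hu.1) (Finset.mem_coe.mpr hv.1) hne'⟩
    · rintro ⟨u, v, rfl, rfl, hadj⟩
      obtain ⟨j, hj⟩ := hcov' s(u,v) (by simpa using hadj)
      exact ⟨by simp [hadj.ne], prey j, ⟨u, j, rfl, hj u (by simp), rfl⟩,
        ⟨v, j, rfl, hj v (by simp), rfl⟩⟩

lemma build_cliques [Fintype V] (G : SimpleGraph V) (k : ℕ) (hle2 : k ≤ 2)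
    (D : (V ⊕ Fin k) → (V ⊕ Fin k) → Prop) (hdag : IsDagRel D)
    (hcomp : competitionGraph D = addIsolated G k) :
    ∃ C : Fin (Fintype.card V) → Finset V,
      (∀ i, G.IsClique (C i : Set V)) ∧ IncrementallyCovers G C Finset.univ := by
  classical
  set n := Fintype.card V with hndef
  set N := Fintype.card (V ⊕ Fin k) with hNdef
  have hcardW : N = n + k := by simp [hNdef, hndef]
  -- descendant count, strictly decreasing along D
  set ord : (V ⊕ Fin k) → ℕ :=
    fun w => (Finset.univ.filter (fun x => Relation.TransGen D w x)).card with hordd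
  have hord : ∀ a b, D a b → ord b < ord a := by
    intro a b hab
    have hsub : insert b (Finset.univ.filter (fun x => Relation.TransGen D b x)) ⊆
        Finset.univ.filter (fun x => Relation.TransGen D a x) := by
      intro x hx
      rcases Finset.mem_insert.mp hx with rfl | hx
      · simp only [Finset.mem_filter, Finset.mem_univ, true_and]
        exact Relation.TransGen.single hab
      · simp only [Finset.mem_filter, Finset.mem_univ, true_and] at hx ⊢
        exact Relation.TransGen.head hab hx
    have hbnot : b ∉ Finset.univ.filter (fun x => Relation.TransGen D b x) := by
      simp only [Finset.mem_filter, Finset.mem_univ, true_and]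
      exact hdag b
    calc ord b < (insert b (Finset.univ.filter (fun x => Relation.TransGen D b x))).card := by
          rw [Finset.card_insert_of_notMem hbnot]
          simp only [hordd]
          omega
      _ ≤ _ := by
          have := Finset.card_le_card hsub
          simpa [hordd] using this
  set g : (V ⊕ Fin k) ≃ Fin N := Fintype.equivFin (V ⊕ Fin k) with hgdef
  set key : (V ⊕ Fin k) → ℕ := fun w => ord w * N + (g w : ℕ) with hkeydef
  have hkey_mono : ∀ a b, ord a < ord b → key a < key b := by
    intro a b h
    calc key a < ord a * N + N := Nat.add_lt_add_left (g a).2 _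
      _ = (ord a + 1) * N := (Nat.succ_mul _ _).symm
      _ ≤ ord b * N := Nat.mul_le_mul_right N h
      _ ≤ key b := Nat.le_add_right _ _
  have hkey_inj : Function.Injective key := by
    intro a b hab
    have hords : ord a = ord b := by
      rcases Nat.lt_trichotomy (ord a) (ord b) with h | h | h
      · exact absurd hab (Nat.ne_of_lt (hkey_mono a b h))
      · exact h
      · exact absurd hab.symm (Nat.ne_of_lt (hkey_mono b a h))
    apply g.injective
    apply Fin.ext
    simp only [hkeydef, hords] at hab
    omega
  have hkey_lt : ∀ a b, D a b → key b < key a := fun a b h => hkey_mono b a (hord a b h)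
  set pos : (V ⊕ Fin k) → ℕ :=
    fun w => (Finset.univ.filter (fun x => key x < key w)).card with hposdef
  have hpos_lt : ∀ w, pos w < N := by
    intro w
    have hsub : Finset.univ.filter (fun x => key x < key w) ⊆ Finset.univ.erase w := by
      intro x hx
      simp only [Finset.mem_filter, Finset.mem_univ, true_and] at hx
      exact Finset.mem_erase.mpr ⟨fun h => by subst h; exact lt_irrefl _ hx, Finset.mem_univ x⟩
    have h1 : pos w ≤ (Finset.univ.erase w).card := Finset.card_le_card hsub
    rw [Finset.card_erase_of_mem (Finset.mem_univ w), Finset.card_univ, ← hNdef] at h1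
    have hN1 : 1 ≤ N := by
      rw [hNdef]
      exact Fintype.card_pos_iff.mpr ⟨w⟩
    omega
  have hpos_mono : ∀ a b, key a < key b → pos a < pos b := by
    intro a b h
    apply Finset.card_lt_card
    constructor
    · intro x hx
      simp only [Finset.mem_filter, Finset.mem_univ, true_and] at hx ⊢
      exact hx.trans h
    · intro hcon
      have ha : a ∈ Finset.univ.filter (fun x => key x < key b) := by
        simp only [Finset.mem_filter, Finset.mem_univ, true_and]; exact h
      have := hcon ha
      simp only [Finset.mem_filter, Finset.mem_univ, true_and] at this
      exact lt_irrefl _ this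
  have hpos_inj : Function.Injective (fun w => pos w) := by
    intro a b hab
    by_contra hne
    have hkne : key a ≠ key b := fun h => hne (hkey_inj h)
    rcases Nat.lt_or_ge (key a) (key b) with h | h
    · exact Nat.ne_of_lt (hpos_mono a b h) hab
    · exact Nat.ne_of_lt (hpos_mono b a (lt_of_le_of_ne h (Ne.symm hkne))) hab.symm
  set π : (V ⊕ Fin k) → Fin N := fun w => ⟨pos w, hpos_lt w⟩ with hπdef
  have hπbij : Function.Bijective π := by
    apply (Fintype.bijective_iff_injective_and_card π).mpr
    refine ⟨?_, by simp [hNdef]⟩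
    intro a b hab
    apply hpos_inj
    simpa [hπdef, Fin.mk.injEq] using hab
  set ψ := Equiv.ofBijective π hπbij with hψdef
  have hψ_pos : ∀ m : Fin N, pos (ψ.symm m) = (m : ℕ) := by
    intro m
    have : π (ψ.symm m) = m := ψ.apply_symm_apply m
    have := congrArg Fin.val this
    simpa [hπdef] using this
  have hψ_symm_pos : ∀ w (h : pos w < N), ψ.symm ⟨pos w, h⟩ = w := by
    intro w h
    apply ψ.injective
    rw [ψ.apply_symm_apply]
    rfl
  -- adjacency transfer
  have hAdj : ∀ u v w, u ≠ v → D (Sum.inl u) w → D (Sum.inl v) w → G.Adj u v := by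
    intro u v w hne h1 h2
    have hadj : (competitionGraph D).Adj (Sum.inl u) (Sum.inl v) :=
      ⟨fun h => hne (Sum.inl.inj h), w, h1, h2⟩
    rw [hcomp] at hadj
    obtain ⟨u', v', h1', h2', hadj⟩ := hadj
    cases Sum.inl.inj h1'
    cases Sum.inl.inj h2'
    exact hadj
  have hAdj2 : ∀ u v, G.Adj u v → ∃ w, D (Sum.inl u) w ∧ D (Sum.inl v) w := by
    intro u v h
    have hadj : (addIsolated G k).Adj (Sum.inl u) (Sum.inl v) := ⟨u, v, rfl, rfl, h⟩
    rw [← hcomp] at hadj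
    exact hadj.2
  have hPrey : ∀ u v, G.Adj u v → ∃ w, D (Sum.inl u) w ∧ D (Sum.inl v) w ∧
      pos w < n ∧ pos w < pos (Sum.inl u) ∧ pos w < pos (Sum.inl v) := by
    intro u v h
    obtain ⟨w, h1, h2⟩ := hAdj2 u v h
    have hp1 : pos w < pos (Sum.inl u) := hpos_mono _ _ (hkey_lt _ _ h1)
    have hp2 : pos w < pos (Sum.inl v) := hpos_mono _ _ (hkey_lt _ _ h2)
    have hpd : pos (Sum.inl u) ≠ pos (Sum.inl v) := by
      intro hcon
      exact h.ne (Sum.inl.inj (hpos_inj hcon))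
    have hb1 : pos (Sum.inl u) < N := hpos_lt _
    have hb2 : pos (Sum.inl v) < N := hpos_lt _
    have hposn : pos w < n := by omega
    exact ⟨w, h1, h2, hposn, hp1, hp2⟩
  have hnN : n ≤ N := by omega
  set C : Fin n → Finset V := fun j =>
    Finset.univ.filter (fun u => D (Sum.inl u) (ψ.symm ⟨(j : ℕ), lt_of_lt_of_le j.2 hnN⟩))
    with hCdef
  have hmemC : ∀ (w : V ⊕ Fin k) (hw : pos w < n) (u : V), D (Sum.inl u) w →
      u ∈ C ⟨pos w, hw⟩ := by
    intro w hw u hD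
    simp only [hCdef, Finset.mem_filter, Finset.mem_univ, true_and]
    rw [hψ_symm_pos w (lt_of_lt_of_le hw hnN)]
    exact hD
  refine ⟨C, ?_, ?_, ?_, ?_⟩
  · intro j u hu v hv hne
    simp only [hCdef, Finset.coe_filter, Set.mem_setOf_eq] at hu hv
    exact hAdj u v _ hne hu.2 hv.2
  · rw [Finset.card_univ]
  · intro e he _
    induction e using Sym2.ind with
    | _ u v =>
      have hadj : G.Adj u v := G.mem_edgeSet.mp he
      obtain ⟨w, h1, h2, hposn, -, -⟩ := hPrey u v hadj
      refine ⟨⟨pos w, hposn⟩, fun x hx => ?_⟩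
      rcases Sym2.mem_iff.mp hx with rfl | rfl
      · exact hmemC w hposn x h1
      · exact hmemC w hposn x h2
  · intro i hi1 hi2
    set W' : Finset V := Finset.univ.filter (fun u => pos (Sum.inl u) < i + 2) with hW'def
    have hWcard : i ≤ W'.card := by
      set A : Finset (V ⊕ Fin k) := Finset.univ.filter (fun w => pos w < i + 2) with hAdef
      have hBA : min (i + 2) N ≤ A.card := by
        have hinj : ∀ m ∈ (Finset.univ : Finset (Fin (min (i+2) N))),
            (ψ.symm ⟨(m : ℕ), lt_of_lt_of_le m.2 (min_le_right _ _)⟩) ∈ A := by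
          intro m _
          simp only [hAdef, Finset.mem_filter, Finset.mem_univ, true_and]
          rw [hψ_pos]
          exact lt_of_lt_of_le m.2 (min_le_left _ _)
        have := Finset.card_le_card_of_injOn
          (fun m : Fin (min (i+2) N) => ψ.symm ⟨(m : ℕ), lt_of_lt_of_le m.2 (min_le_right _ _)⟩)
          (fun m hm => hinj m hm)
          (by
            intro a _ b _ hab
            have := ψ.symm.injective hab
            exact Fin.ext (by simpa [Fin.mk.injEq] using congrArg Fin.val this))
        simpa using this
      have hAW : A.card ≤ W'.card + k := by
        have hsub : A ⊆ W'.image Sum.inl ∪ (Finset.univ : Finset (Fin k)).image Sum.inr := by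
          intro w hw
          simp only [hAdef, Finset.mem_filter, Finset.mem_univ, true_and] at hw
          rcases w with u | x
          · apply Finset.mem_union_left
            exact Finset.mem_image_of_mem _ (by
              simp only [hW'def, Finset.mem_filter, Finset.mem_univ, true_and]; exact hw)
          · apply Finset.mem_union_right
            exact Finset.mem_image_of_mem _ (Finset.mem_univ x)
        calc A.card ≤ (W'.image Sum.inl ∪ (Finset.univ : Finset (Fin k)).image Sum.inr).card :=
              Finset.card_le_card hsub
          _ ≤ (W'.image Sum.inl).card + ((Finset.univ : Finset (Fin k)).image Sum.inr).card :=
              Finset.card_union_le _ _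
          _ ≤ W'.card + k := by
              rw [Finset.card_image_of_injective W' (Sum.inl_injective : Function.Injective (Sum.inl : V → V ⊕ Fin k))]
              have h9 : ((Finset.univ : Finset (Fin k)).image (Sum.inr : Fin k → V ⊕ Fin k)).card ≤ k :=
                le_trans Finset.card_image_le (by simp)
              omega
      have hk2 : k ≤ 2 := hle2
      omega
    refine ⟨W', Finset.subset_univ _, hWcard, ?_⟩
    intro w hw e he hwe
    induction e using Sym2.ind with
    | _ a b =>
      have hadj : G.Adj a b := G.mem_edgeSet.mp he
      obtain ⟨p, h1, h2, hposn, hpa, hpb⟩ := hPrey a b hadj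
      simp only [hW'def, Finset.mem_filter, Finset.mem_univ, true_and] at hw
      have hplt : pos p < i + 1 := by
        rcases Sym2.mem_iff.mp hwe with rfl | rfl <;> omega
      refine ⟨⟨pos p, hposn⟩, hplt, fun x hx => ?_⟩
      rcases Sym2.mem_iff.mp hx with rfl | rfl
      · exact hmemC p hposn x h1
      · exact hmemC p hposn x h2

lemma part_backward [Fintype V] (G : SimpleGraph V) (hle2 : competitionNumber G ≤ 2) :
    ∃ C : Fin (Fintype.card V) → Finset V,
      (∀ i, G.IsClique (C i : Set V)) ∧ IncrementallyCovers G C Finset.univ := by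
  classical
  obtain ⟨D, hdag, hcomp⟩ :
      ∃ D : (V ⊕ Fin (competitionNumber G)) → (V ⊕ Fin (competitionNumber G)) → Prop,
        IsDagRel D ∧ competitionGraph D = addIsolated G (competitionNumber G) := by
    obtain ⟨k0, hk0⟩ := exists_dag G
    have hne : {k | ∃ D : (V ⊕ Fin k) → (V ⊕ Fin k) → Prop,
        IsDagRel D ∧ competitionGraph D = addIsolated G k}.Nonempty := ⟨k0, hk0⟩
    exact Nat.sInf_mem hne
  exact build_cliques G (competitionNumber G) hle2 D hdag hcomp

/-- A finite graph on `n` vertices has competition number at most `2` iff there is a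
sequence of `n` cliques incrementally covering its vertex set. -/
theorem competitionNumber_le_two_iff [Fintype V] (G : SimpleGraph V) :
    competitionNumber G ≤ 2 ↔
      ∃ C : Fin (Fintype.card V) → Finset V,
        (∀ i, G.IsClique (C i : Set V)) ∧ IncrementallyCovers G C Finset.univ := by
  constructor
  · exact part_backward G
  · rintro ⟨C, h1, h2⟩
    exact part_forward G C h1 h2

end CompKim
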